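/- arXiv:1710.02635 — 4 statements merged into one kernel-verified Lean document; each statement's English description precedes it below -/
import Mathlib

section
/- Let X be a finite set, W a signed measure on subsets of X integrating to 1, and K : X × X → ℂ a kernel such that for every finite list of distinct points x_1,…,x_n ∈ X, Σ_{Y ⊇ {x_1,…,x_n}} W(Y) = det[K(x_i,x_j)]_{1≤i,j≤n}. Then for every B ⊆ X, Σ_{Y ⊆ X \ B} W(Y) = det(I − K_B), where K_B is the submatrix of K with rows and columns in B. -/
open scoped BigOperators

open Finset in
lemma det_one_add_sum_minors {n : Type*} [Fintype n] [DecidableEq n] {R : Type*} [CommRing R]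
    (M : Matrix n n R) :
    (1 + M).det
      = ∑ A : Finset n, (M.submatrix (Subtype.val : {x // x ∈ A} → n) Subtype.val).det := by
  rw [Matrix.det_apply']
  have h1 : ∀ σ : Equiv.Perm n, ∏ i, (1 + M) (σ i) i
      = ∑ A ∈ (univ : Finset n).powerset,
          (∏ i ∈ A, M (σ i) i) * (if ∀ i, i ∉ A → σ i = i then 1 else 0) := by
    intro σ
    have : ∀ i : n, (1 + M) (σ i) i = M (σ i) i + (if σ i = i then 1 else 0) := by
      intro i
      simp [Matrix.add_apply, Matrix.one_apply, add_comm, eq_comm]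
    rw [Finset.prod_congr rfl (fun i _ => this i), Finset.prod_add]
    refine Finset.sum_congr rfl fun A hA => ?_
    congr 1
    rw [Finset.prod_boole]
    congr 1
    simp only [Finset.mem_sdiff, Finset.mem_univ, true_and, eq_iff_iff]
  simp_rw [h1, Finset.mul_sum, Finset.powerset_univ]
  rw [Finset.sum_comm]
  refine Finset.sum_congr rfl fun A _ => ?_
  have h2 : ∀ σ : Equiv.Perm n,
      ((Equiv.Perm.sign σ : ℤ) : R) * ((∏ i ∈ A, M (σ i) i) * (if ∀ i, i ∉ A → σ i = i then 1 else 0))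
        = if (∀ i, i ∉ A → σ i = i)
            then ((Equiv.Perm.sign σ : ℤ) : R) * ∏ i ∈ A, M (σ i) i else 0 := by
    intro σ; split <;> simp [*]
  simp_rw [h2]
  rw [← Finset.sum_filter]
  rw [Finset.sum_subtype (p := fun σ : Equiv.Perm n => ∀ i, i ∉ A → σ i = i)
      (Finset.univ.filter fun σ : Equiv.Perm n => ∀ i, i ∉ A → σ i = i)
      (fun σ => by simp) (fun σ => ((Equiv.Perm.sign σ : ℤ) : R) * ∏ i ∈ A, M (σ i) i)]
  rw [Matrix.det_apply']
  rw [← Equiv.sum_comp (Equiv.Perm.subtypeEquivSubtypePerm (fun x => x ∈ A))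
    (fun σ : {σ : Equiv.Perm n // ∀ i, i ∉ A → σ i = i} =>
      ((Equiv.Perm.sign σ.1 : ℤ) : R) * ∏ i ∈ A, M (σ.1 i) i)]
  refine Finset.sum_congr rfl fun τ _ => ?_
  have hsign : Equiv.Perm.sign (Equiv.Perm.ofSubtype τ) = Equiv.Perm.sign τ := by
    have := Equiv.Perm.sign_ofSubtype τ
    convert this using 2
  have happ : ∀ i : {x // x ∈ A}, Equiv.Perm.ofSubtype τ (i : n) = ((τ i : {x // x ∈ A}) : n) :=
    fun i => Equiv.Perm.ofSubtype_apply_of_mem τ i.2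
  have hprod : ∏ i ∈ A, M (Equiv.Perm.ofSubtype τ i) i
      = ∏ i : {x // x ∈ A}, M.submatrix Subtype.val Subtype.val (τ i) i := by
    rw [← Finset.prod_coe_sort A (fun i => M (Equiv.Perm.ofSubtype τ i) i)]
    exact Finset.prod_congr rfl fun i _ => by rw [happ i]; rfl
  have : ((Equiv.Perm.subtypeEquivSubtypePerm (fun x => x ∈ A)) τ : Equiv.Perm n)
      = Equiv.Perm.ofSubtype τ := rfl
  simp only [this, hsign, hprod]

/-- Probability of an empty region for a determinantal point process on a finite set:
if the correlation functions of the signed measure `W` are given by determinants of the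
kernel `K`, then `Σ_{Y ⊆ X \ B} W(Y) = det(I − K_B)`. -/
theorem gap_probability {ι : Type*} [Fintype ι] [DecidableEq ι]
    (W : Finset ι → ℂ) (K : Matrix ι ι ℂ)
    (hW : ∑ Y : Finset ι, W Y = 1)
    (hK : ∀ (n : ℕ) (x : Fin n → ι), Function.Injective x →
      ∑ Y ∈ Finset.univ.filter (fun Y : Finset ι => ∀ i, x i ∈ Y), W Y
        = Matrix.det (Matrix.of fun i j : Fin n => K (x i) (x j)))
    (B : Finset ι) :
    ∑ Y ∈ Finset.univ.filter (fun Y : Finset ι => ∀ b ∈ B, b ∉ Y), W Y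
      = Matrix.det ((1 : Matrix {x // x ∈ B} {x // x ∈ B} ℂ)
          - Matrix.of fun i j : {x // x ∈ B} => K i j) := by
  classical
  -- Correlation functions for an arbitrary finite subset
  have hcorr : ∀ A : Finset ι,
      ∑ Y ∈ Finset.univ.filter (fun Y : Finset ι => A ⊆ Y), W Y
        = Matrix.det (Matrix.of fun i j : {x // x ∈ A} => K i j) := by
    intro A
    have hinj : Function.Injective
        (fun i : Fin A.card => ((A.equivFin.symm i : {x // x ∈ A}) : ι)) :=
      fun i j h => A.equivFin.symm.injective (Subtype.val_injective h)
    have h := hK A.card _ hinj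
    have hset : (Finset.univ.filter fun Y : Finset ι =>
          ∀ i, ((A.equivFin.symm i : {x // x ∈ A}) : ι) ∈ Y)
        = Finset.univ.filter (fun Y : Finset ι => A ⊆ Y) := by
      ext Y
      simp only [Finset.mem_filter, Finset.mem_univ, true_and]
      constructor
      · intro hy a ha
        have := hy (A.equivFin ⟨a, ha⟩)
        simpa using this
      · intro hy i
        exact hy (A.equivFin.symm i).2
    rw [hset] at h
    rw [h]
    have hmat : (Matrix.of fun i j : Fin A.card =>
          K ((A.equivFin.symm i : {x // x ∈ A}) : ι) ((A.equivFin.symm j : {x // x ∈ A}) : ι))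
        = (Matrix.of fun i j : {x // x ∈ A} => K i j).submatrix A.equivFin.symm A.equivFin.symm :=
      rfl
    rw [hmat, Matrix.det_submatrix_equiv_self]
  -- inclusion-exclusion on the left side
  have hie : ∑ Y ∈ Finset.univ.filter (fun Y : Finset ι => ∀ b ∈ B, b ∉ Y), W Y
      = ∑ A ∈ B.powerset, (-1 : ℂ) ^ A.card
          * Matrix.det (Matrix.of fun i j : {x // x ∈ A} => K i j) := by
    rw [Finset.sum_filter]
    have step1 : ∀ Y : Finset ι,
        (if ∀ b ∈ B, b ∉ Y then W Y else 0)
          = ∑ A ∈ B.powerset, (if A ⊆ Y then (-1 : ℂ) ^ A.card * W Y else 0) := by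
      intro Y
      have hpow : ∑ A ∈ (B ∩ Y).powerset, (-1 : ℂ) ^ A.card
          = if B ∩ Y = ∅ then 1 else 0 := by
        have := Finset.sum_powerset_neg_one_pow_card (x := B ∩ Y)
        have := congrArg (Int.cast : ℤ → ℂ) this
        push_cast at this
        convert this using 1
      have hps : (B ∩ Y).powerset = B.powerset.filter (fun A => A ⊆ Y) := by
        ext A
        simp only [Finset.mem_powerset, Finset.mem_filter, Finset.subset_inter_iff]
      calc (if ∀ b ∈ B, b ∉ Y then W Y else 0)
          = (if B ∩ Y = ∅ then 1 else 0) * W Y := by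
            have : (∀ b ∈ B, b ∉ Y) ↔ B ∩ Y = ∅ := by
              simp [Finset.eq_empty_iff_forall_notMem, Finset.mem_inter]
            rw [if_congr this rfl rfl]
            split <;> simp
        _ = (∑ A ∈ (B ∩ Y).powerset, (-1 : ℂ) ^ A.card) * W Y := by rw [hpow]
        _ = ∑ A ∈ B.powerset.filter (fun A => A ⊆ Y), (-1 : ℂ) ^ A.card * W Y := by
            rw [hps, Finset.sum_mul]
        _ = ∑ A ∈ B.powerset, (if A ⊆ Y then (-1 : ℂ) ^ A.card * W Y else 0) :=
            Finset.sum_filter _ _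
    simp_rw [step1]
    rw [Finset.sum_comm]
    refine Finset.sum_congr rfl fun A hA => ?_
    rw [← hcorr A, Finset.sum_filter, Finset.mul_sum]
    refine Finset.sum_congr rfl fun Y _ => ?_
    split <;> simp
  rw [hie]
  -- right side: expand det(1 - K_B)
  rw [sub_eq_add_neg, det_one_add_sum_minors]
  -- match the two sums via the bijection S ↦ S.map (Embedding.subtype _)
  refine (Finset.sum_bij
    (fun (S : Finset {x // x ∈ B}) _ => S.map (Function.Embedding.subtype (· ∈ B)))
    ?_ ?_ ?_ ?_).symm
  · intro S _
    rw [Finset.mem_powerset]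
    intro a ha
    exact (Finset.property_of_mem_map_subtype S ha)
  · intro S _ T _ h
    exact Finset.map_injective _ h
  · intro A hA
    refine ⟨(A.subtype (· ∈ B)), Finset.mem_univ _, ?_⟩
    show (A.subtype (fun x => x ∈ B)).map (Function.Embedding.subtype fun x => x ∈ B) = A
    rw [Finset.subtype_map]
    exact Finset.filter_true_of_mem fun a ha => Finset.mem_powerset.mp hA ha
  · intro S _
    set A : Finset ι := S.map (Function.Embedding.subtype (· ∈ B)) with hA
    -- the matrix on S is (-1)ᶜᵃʳᵈ times the K-matrix on A
    let e : {y : {x // x ∈ B} // y ∈ S} ≃ {x : ι // x ∈ A} :=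
      { toFun := fun y => ⟨(y.1 : ι), Finset.mem_map_of_mem _ y.2⟩
        invFun := fun x => ⟨⟨x.1, Finset.property_of_mem_map_subtype S x.2⟩, by
          obtain ⟨a, ha, hax⟩ := Finset.mem_map.mp x.2
          have : a = ⟨x.1, Finset.property_of_mem_map_subtype S x.2⟩ := Subtype.ext hax
          exact this ▸ ha⟩
        left_inv := fun y => by ext; rfl
        right_inv := fun x => by ext; rfl }
    have hdet : Matrix.det (Matrix.of fun i j : {x : ι // x ∈ A} => K i j)
        = Matrix.det ((Matrix.of fun i j : {x // x ∈ B} => K i j).submatrix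
            (Subtype.val : {y // y ∈ S} → _) Subtype.val) := by
      rw [← Matrix.det_submatrix_equiv_self e (Matrix.of fun i j : {x : ι // x ∈ A} => K i j)]
      rfl
    have hcard : A.card = S.card := Finset.card_map _
    rw [hcard, hdet]
    have hneg : ((-(Matrix.of fun i j : {x // x ∈ B} => K i j)).submatrix
          (Subtype.val : {y // y ∈ S} → {x // x ∈ B})
          (Subtype.val : {y // y ∈ S} → {x // x ∈ B}))
        = -((Matrix.of fun i j : {x // x ∈ B} => K i j).submatrix
            (Subtype.val : {y // y ∈ S} → {x // x ∈ B})
            (Subtype.val : {y // y ∈ S} → {x // x ∈ B})) := rfl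
    rw [hneg, Matrix.det_neg, Fintype.card_coe]
end

section
/- Karlin–McGregor formula: Let X_1,…,X_n be independent Markov chains on ℤ, all with the same one-step transition probabilities p(x,y) supported on y = x ± 1 (i.e. p(x,x+1) + p(x,x−1) = 1), started at even sites k_1 < k_2 < ⋯ < k_n. Then for states ℓ_1 < ℓ_2 < ⋯ < ℓ_n, the probability that X_i(t) = ℓ_i for all i and that no two chains are ever at the same site at the same time during {0,1,…,t} equals det[p_t(k_i, ℓ_j)]_{1≤i,j≤n}, where p_t denotes the t-step transition probability. -/
open scoped BigOperators Classical

noncomputable section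

/-- Position after `s` steps of a nearest-neighbour walk started at `k`,
with up/down steps given by `ε`. -/
def pos (k : ℤ) {t : ℕ} (ε : Fin t → Bool) (s : ℕ) : ℤ :=
  k + ∑ j : Fin t, if (j : ℕ) < s then (if ε j then 1 else -1) else 0

/-- Probability weight of the nearest-neighbour path with steps `ε` started at `k`. -/
def pathWeight (p : ℤ → ℤ → ℝ) (k : ℤ) {t : ℕ} (ε : Fin t → Bool) : ℝ :=
  ∏ j : Fin t, p (pos k ε j) (pos k ε (j + 1))

/-- `t`-step transition probability of the nearest-neighbour Markov chain. -/
def transition (p : ℤ → ℤ → ℝ) (t : ℕ) (x y : ℤ) : ℝ :=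
  ∑ ε : Fin t → Bool, if pos x ε t = y then pathWeight p x ε else 0

/-!
Expanding the determinant by the Leibniz formula and each entry `p_t(k i, ℓ j)` as a sum over
paths writes `det` as a signed sum over pairs `(σ, ε)` of a permutation and a family of paths,
path `i` running from `k i` to `ℓ (σ i)`. On families with a collision, exchanging the tails of
two paths that meet at the first collision time (and composing `σ` with that transposition) is a
weight-preserving, sign-reversing involution, so these terms cancel. A family without collision
keeps its order: all walks start at even sites, so the gap between two of them stays even and
changes by at most 2 per step, hence cannot change sign without vanishing. Then `σ` is strictly
monotone, i.e. `σ = 1`.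
-/

open Finset Function

variable {t : ℕ}

theorem pos_zero (k : ℤ) (ε : Fin t → Bool) : pos k ε 0 = k := by
  simp [pos]

theorem pos_succ (k : ℤ) (ε : Fin t → Bool) {s : ℕ} (hs : s < t) :
    pos k ε (s + 1) = pos k ε s + if ε ⟨s, hs⟩ then 1 else -1 := by
  have split (j : Fin t) : (if (j : ℕ) < s + 1 then (if ε j then (1 : ℤ) else -1) else 0) =
      (if (j : ℕ) < s then (if ε j then 1 else -1) else 0) +
        if j = ⟨s, hs⟩ then (if ε j then 1 else -1) else 0 := by
    simp only [Fin.ext_iff]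
    split_ifs <;> omega
  simp only [pos, split, sum_add_distrib, sum_ite_eq', mem_univ, if_true]
  ring

theorem pos_lt_pos_of_forall_ne {x y : ℤ} (hxy : x < y) (hpar : Even (y - x))
    (ε δ : Fin t → Bool) (hne : ∀ s ≤ t, pos x ε s ≠ pos y δ s) : pos x ε t < pos y δ t := by
  suffices h : ∀ s ≤ t, pos x ε s < pos y δ s ∧ (pos y δ s - pos x ε s) % 2 = 0 from
    (h t le_rfl).1
  intro s
  induction s with
  | zero => intro _; rw [pos_zero, pos_zero]; exact ⟨hxy, Int.even_iff.1 hpar⟩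
  | succ s ih =>
    intro hs
    obtain ⟨hlt, hgap⟩ := ih (by omega)
    have hne' := hne (s + 1) hs
    rw [pos_succ _ _ hs, pos_succ _ _ hs] at hne' ⊢
    split_ifs at hne' ⊢ <;> omega

def spliceAt (s₀ : ℕ) (a b : Fin t → Bool) : Fin t → Bool :=
  fun j => if (j : ℕ) < s₀ then a j else b j

theorem pos_spliceAt_of_le {s₀ s : ℕ} (h : s ≤ s₀) (k : ℤ) (a b : Fin t → Bool) :
    pos k (spliceAt s₀ a b) s = pos k a s := by
  unfold pos spliceAt
  congr 1
  refine sum_congr rfl fun j _ => ?_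
  split_ifs <;> first | rfl | omega

theorem pos_spliceAt_of_ge {s₀ s : ℕ} (h : s₀ ≤ s) (k k' : ℤ) (a b : Fin t → Bool) :
    pos k (spliceAt s₀ a b) s = pos k a s₀ + pos k' b s - pos k' b s₀ := by
  have split (j : Fin t) :
      (if (j : ℕ) < s then (if spliceAt s₀ a b j then (1 : ℤ) else -1) else 0) =
        (if (j : ℕ) < s₀ then (if a j then 1 else -1) else 0) +
          (if (j : ℕ) < s then (if b j then 1 else -1) else 0) -
            if (j : ℕ) < s₀ then (if b j then 1 else -1) else 0 := by
    unfold spliceAt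
    split_ifs <;> omega
  simp only [pos, split, sum_add_distrib, sum_sub_distrib]
  ring

theorem pathWeight_spliceAt (p : ℤ → ℤ → ℝ) {s₀ : ℕ} {k k' : ℤ} {a b : Fin t → Bool}
    (hmeet : pos k a s₀ = pos k' b s₀) :
    pathWeight p k (spliceAt s₀ a b) = ∏ j : Fin t,
      if (j : ℕ) < s₀ then p (pos k a j) (pos k a (j + 1))
      else p (pos k' b j) (pos k' b (j + 1)) := by
  refine prod_congr rfl fun j _ => ?_
  split_ifs with hj
  · rw [pos_spliceAt_of_le hj.le, pos_spliceAt_of_le hj]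
  · rw [pos_spliceAt_of_ge (not_lt.1 hj) k k', pos_spliceAt_of_ge (by omega) k k', hmeet,
      add_sub_cancel_left, add_sub_cancel_left]

variable {n : ℕ}

def positions (k : Fin n → ℤ) (ε : Fin n → Fin t → Bool) (s : ℕ) : Fin n → ℤ :=
  fun i => pos (k i) (ε i) s

def swapTails (s₀ : ℕ) (τ : Equiv.Perm (Fin n)) (ε : Fin n → Fin t → Bool) :
    Fin n → Fin t → Bool :=
  fun i => spliceAt s₀ (ε i) (ε (τ i))

def signedWeight (p : ℤ → ℤ → ℝ) (k ℓ : Fin n → ℤ) (σ : Equiv.Perm (Fin n))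
    (ε : Fin n → Fin t → Bool) : ℝ :=
  Equiv.Perm.sign σ * if positions k ε t = ℓ ∘ σ then ∏ i, pathWeight p (k i) (ε i) else 0

theorem det_transition_eq_sum_signedWeight (p : ℤ → ℤ → ℝ) (k ℓ : Fin n → ℤ) :
    (Matrix.of fun i j => transition p t (k i) (ℓ j)).det =
      ∑ σ, ∑ ε : Fin n → Fin t → Bool, signedWeight p k ℓ σ ε := by
  rw [← Matrix.det_transpose, Matrix.det_apply']
  refine sum_congr rfl fun σ _ => ?_
  simp only [Matrix.transpose_apply, Matrix.of_apply, transition, Fintype.prod_sum,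
    Fintype.prod_ite_zero, signedWeight, mul_sum, funext_iff, positions, comp_apply]
  congr!

section swapTails

variable {k : Fin n → ℤ} {ε : Fin n → Fin t → Bool} {s₀ : ℕ} {τ : Equiv.Perm (Fin n)}

theorem positions_swapTails_of_le {s : ℕ} (h : s ≤ s₀) :
    positions k (swapTails s₀ τ ε) s = positions k ε s :=
  funext fun _ => pos_spliceAt_of_le h _ _ _

theorem positions_swapTails_of_ge (hτ : positions k ε s₀ ∘ τ = positions k ε s₀) {s : ℕ}
    (h : s₀ ≤ s) : positions k (swapTails s₀ τ ε) s = positions k ε s ∘ τ := by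
  funext i
  have hmeet := congrFun hτ i
  simp only [positions, swapTails, comp_apply] at hmeet ⊢
  rw [pos_spliceAt_of_ge h _ (k (τ i)), ← hmeet]
  ring

theorem prod_pathWeight_swapTails (p : ℤ → ℤ → ℝ)
    (hτ : positions k ε s₀ ∘ τ = positions k ε s₀) :
    ∏ i, pathWeight p (k i) (swapTails s₀ τ ε i) = ∏ i, pathWeight p (k i) (ε i) := by
  simp only [swapTails, pathWeight_spliceAt p (congrFun hτ _).symm]
  unfold pathWeight
  conv_lhs => rw [prod_comm]
  conv_rhs => rw [prod_comm]
  refine prod_congr rfl fun j _ => ?_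
  split_ifs
  · rfl
  · exact Equiv.prod_comp τ fun i => p (pos (k i) (ε i) j) (pos (k i) (ε i) (j + 1))

theorem swapTails_swapTails (hτ : Involutive τ) :
    swapTails s₀ τ (swapTails s₀ τ ε) = ε := by
  funext i j
  simp only [swapTails, spliceAt, hτ i]
  split_ifs <;> rfl

theorem signedWeight_mul_swapTails (p : ℤ → ℤ → ℝ) (ℓ : Fin n → ℤ) (σ : Equiv.Perm (Fin n))
    (hs₀ : s₀ ≤ t) (hτ : positions k ε s₀ ∘ τ = positions k ε s₀) :
    signedWeight p k ℓ (σ * τ) (swapTails s₀ τ ε) =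
      Equiv.Perm.sign τ * signedWeight p k ℓ σ ε := by
  rw [signedWeight, signedWeight, positions_swapTails_of_ge hτ hs₀,
    prod_pathWeight_swapTails p hτ, Equiv.Perm.coe_mul, ← comp_assoc, Equiv.Perm.sign_mul]
  simp only [τ.surjective.injective_comp_right.eq_iff]
  push_cast
  ring

end swapTails

def HasCollision (k : Fin n → ℤ) (ε : Fin n → Fin t → Bool) : Prop :=
  ∃ s ≤ t, ¬Injective (positions k ε s)

theorem not_hasCollision_iff {k : Fin n → ℤ} {ε : Fin n → Fin t → Bool} :
    ¬HasCollision k ε ↔ ∀ s ≤ t, ∀ i j, i ≠ j → pos (k i) (ε i) s ≠ pos (k j) (ε j) s := by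
  simp only [HasCollision, not_exists, not_and, not_not, injective_iff_pairwise_ne]
  rfl

section collisionSwap

variable {ι β : Type*} [DecidableEq ι]

theorem comp_swap_eq_self {x : ι → β} {a b : ι} (h : x a = x b) : x ∘ Equiv.swap a b = x := by
  rw [Equiv.comp_swap_eq_update, h, update_eq_self, ← h, update_eq_self]

-- A function of the positions alone; the tail swap does not change the positions at the
-- collision time, so applying `collisionInvolution` twice uses the same transposition.
def collisionSwap (x : ι → β) : Equiv.Perm ι :=
  if h : ∃ i j, x i = x j ∧ i ≠ j then Equiv.swap h.choose h.choose_spec.choose else 1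

theorem comp_collisionSwap (x : ι → β) : x ∘ collisionSwap x = x := by
  unfold collisionSwap
  split_ifs with h
  · exact comp_swap_eq_self h.choose_spec.choose_spec.1
  · rfl

theorem collisionSwap_involutive (x : ι → β) : Involutive (collisionSwap x) := by
  unfold collisionSwap
  split_ifs
  · exact Equiv.swap_apply_self _ _
  · exact fun _ => rfl

theorem sign_collisionSwap [Fintype ι] {x : ι → β} (h : ¬Injective x) :
    Equiv.Perm.sign (collisionSwap x) = -1 := by
  rw [not_injective_iff] at h
  rw [collisionSwap, dif_pos h]
  exact Equiv.Perm.sign_swap h.choose_spec.choose_spec.2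

end collisionSwap

section collisionInvolution

variable {k : Fin n → ℤ} {ε : Fin n → Fin t → Bool}

theorem find_hasCollision_swapTails (h : HasCollision k ε) (τ : Equiv.Perm (Fin n)) :
    ∃ h' : HasCollision k (swapTails (Nat.find h) τ ε), Nat.find h' = Nat.find h := by
  obtain ⟨hle, hspec⟩ := Nat.find_spec h
  have h' : HasCollision k (swapTails (Nat.find h) τ ε) :=
    ⟨Nat.find h, hle, by rwa [positions_swapTails_of_le le_rfl]⟩
  refine ⟨h', (Nat.find_eq_iff h').2 ⟨⟨hle, by rwa [positions_swapTails_of_le le_rfl]⟩, ?_⟩⟩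
  intro s hs
  rw [positions_swapTails_of_le hs.le]
  exact Nat.find_min h hs

variable (k) in
def collisionInvolution (x : Equiv.Perm (Fin n) × (Fin n → Fin t → Bool)) :
    Equiv.Perm (Fin n) × (Fin n → Fin t → Bool) :=
  if h : HasCollision k x.2 then
    (x.1 * collisionSwap (positions k x.2 (Nat.find h)),
      swapTails (Nat.find h) (collisionSwap (positions k x.2 (Nat.find h))) x.2)
  else x

theorem collisionInvolution_of_hasCollision (h : HasCollision k ε) (σ : Equiv.Perm (Fin n)) :
    collisionInvolution k (σ, ε) = (σ * collisionSwap (positions k ε (Nat.find h)),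
      swapTails (Nat.find h) (collisionSwap (positions k ε (Nat.find h))) ε) :=
  dif_pos h

variable (k) in
theorem collisionInvolution_involutive : Involutive (collisionInvolution (t := t) k) := by
  rintro ⟨σ, ε⟩
  by_cases h : HasCollision k ε
  · obtain ⟨h', hfind⟩ :=
      find_hasCollision_swapTails h (collisionSwap (positions k ε (Nat.find h)))
    rw [collisionInvolution_of_hasCollision h, collisionInvolution_of_hasCollision h', hfind,
      positions_swapTails_of_le le_rfl, mul_assoc, swapTails_swapTails (collisionSwap_involutive _),
      show collisionSwap _ * collisionSwap _ = 1 from Equiv.ext (collisionSwap_involutive _),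
      mul_one]
  · simp only [collisionInvolution, dif_neg h]

end collisionInvolution

theorem sum_signedWeight_hasCollision (p : ℤ → ℤ → ℝ) (k ℓ : Fin n → ℤ) :
    ∑ x ∈ univ.filter (fun x : Equiv.Perm (Fin n) × (Fin n → Fin t → Bool) =>
      HasCollision k x.2), signedWeight p k ℓ x.1 x.2 = 0 := by
  refine sum_involution (fun x _ => collisionInvolution k x) ?_ ?_ ?_
    (fun x _ => collisionInvolution_involutive k x)
  · rintro ⟨σ, ε⟩ hx
    have h : HasCollision k ε := (mem_filter.1 hx).2
    rw [collisionInvolution_of_hasCollision h, signedWeight_mul_swapTails p ℓ σ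
      (Nat.find_spec h).1 (comp_collisionSwap _), sign_collisionSwap (Nat.find_spec h).2]
    push_cast
    ring
  · rintro ⟨σ, ε⟩ hx - hfix
    have h : HasCollision k ε := (mem_filter.1 hx).2
    rw [collisionInvolution_of_hasCollision h, Prod.mk.injEq, mul_eq_left] at hfix
    have := sign_collisionSwap (Nat.find_spec h).2
    rw [hfix.1, Equiv.Perm.sign_one] at this
    exact absurd this (by decide)
  · rintro ⟨σ, ε⟩ hx
    have h : HasCollision k ε := (mem_filter.1 hx).2
    rw [collisionInvolution_of_hasCollision h]
    exact mem_filter.2 ⟨mem_univ _, (find_hasCollision_swapTails h _).1⟩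

theorem strictMono_positions_of_not_hasCollision {k : Fin n → ℤ} (hk : StrictMono k)
    (hkeven : ∀ i, Even (k i)) {ε : Fin n → Fin t → Bool} (hε : ¬HasCollision k ε) :
    StrictMono (positions k ε t) := fun i j hij =>
  pos_lt_pos_of_forall_ne (hk hij) ((hkeven j).sub (hkeven i)) (ε i) (ε j)
    (fun s hs => not_hasCollision_iff.1 hε s hs i j hij.ne)

theorem signedWeight_eq_zero_of_not_hasCollision (p : ℤ → ℤ → ℝ) {k ℓ : Fin n → ℤ}
    (hk : StrictMono k) (hkeven : ∀ i, Even (k i)) (hℓ : StrictMono ℓ)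
    {ε : Fin n → Fin t → Bool} (hε : ¬HasCollision k ε) {σ : Equiv.Perm (Fin n)} (hσ : σ ≠ 1) :
    signedWeight p k ℓ σ ε = 0 := by
  refine mul_eq_zero_of_right _ (if_neg fun hend => hσ (Equiv.ext fun i => ?_))
  have hmono : StrictMono (ℓ ∘ σ) := hend ▸ strictMono_positions_of_not_hasCollision hk hkeven hε
  exact StrictMono.apply_eq fun a b hab => hℓ.lt_iff_lt.1 (hmono hab)

theorem karlin_mcgregor_general (p : ℤ → ℤ → ℝ)
    (n t : ℕ) (k ℓ : Fin n → ℤ)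
    (hk : StrictMono k) (hkeven : ∀ i, Even (k i)) (hℓ : StrictMono ℓ) :
    (∑ ε : Fin n → Fin t → Bool,
      if (∀ i, pos (k i) (ε i) t = ℓ i) ∧
         (∀ s ≤ t, ∀ i j : Fin n, i ≠ j → pos (k i) (ε i) s ≠ pos (k j) (ε j) s)
      then ∏ i, pathWeight p (k i) (ε i) else 0)
      = Matrix.det (Matrix.of fun i j : Fin n => transition p t (k i) (ℓ j)) := by
  symm
  rw [det_transition_eq_sum_signedWeight, ← Fintype.sum_prod_type',
    ← sum_filter_add_sum_filter_not univ
      (fun x : Equiv.Perm (Fin n) × (Fin n → Fin t → Bool) => HasCollision k x.2),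
    sum_signedWeight_hasCollision, zero_add, sum_filter, Fintype.sum_prod_type,
    sum_eq_single (1 : Equiv.Perm (Fin n))
      (fun σ _ hσ => sum_eq_zero fun ε _ => ite_eq_right_iff.2 fun hε =>
        signedWeight_eq_zero_of_not_hasCollision p hk hkeven hℓ hε hσ)
      (fun h => absurd (mem_univ 1) h)]
  refine sum_congr rfl fun ε _ => ?_
  simp only [signedWeight, not_hasCollision_iff, Equiv.Perm.sign_one, Equiv.Perm.coe_one,
    comp_id, funext_iff, positions, Units.val_one, Int.cast_one, one_mul]
  split_ifs <;> tauto

/-- Karlin–McGregor formula: for independent nearest-neighbour Markov chains on ℤ started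
at even sites `k 0 < ⋯ < k (n-1)`, the probability of ending at `ℓ 0 < ⋯ < ℓ (n-1)` at time `t`
without any two chains ever meeting equals `det [p_t(k i, ℓ j)]`. -/
theorem karlin_mcgregor (p : ℤ → ℤ → ℝ)
    (hnn : ∀ x y, 0 ≤ p x y)
    (hsupp : ∀ x y, p x y ≠ 0 → y = x + 1 ∨ y = x - 1)
    (hsum : ∀ x, p x (x + 1) + p x (x - 1) = 1)
    (n t : ℕ) (k ℓ : Fin n → ℤ)
    (hk : StrictMono k) (hkeven : ∀ i, Even (k i)) (hℓ : StrictMono ℓ) :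
    (∑ ε : Fin n → Fin t → Bool,
      if (∀ i, pos (k i) (ε i) t = ℓ i) ∧
         (∀ s ≤ t, ∀ i j : Fin n, i ≠ j → pos (k i) (ε i) s ≠ pos (k j) (ε j) s)
      then ∏ i, pathWeight p (k i) (ε i) else 0)
      = Matrix.det (Matrix.of fun i j : Fin n => transition p t (k i) (ℓ j)) :=
  karlin_mcgregor_general p n t k ℓ hk hkeven hℓ
end
end

section
/- The Bernoulli product measure with density ρ ∈ [0,1] on {0,1}^ℤ is invariant for TASEP: for every cylinder function f, the integral of Lf against the product measure μ_ρ is zero, where (Lf)(η) = Σ_{x∈ℤ} η_x (1 − η_{x+1}) (f(η^{x,x+1}) − f(η)). -/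
/-!
A Bernoulli product measure is exchangeable: swapping two coordinates preserves it, as one sees
on the (finite) marginal that a cylinder function depends on. Under the swap of `x` and `x + 1`,
the configurations from which a particle can jump from `x` to `x + 1` correspond to those from
which it can jump back, so the expected contribution of the bond `(x, x + 1)` to `Lf` is
`∫ η_{x+1} f dμ - ∫ η_x f dμ`. Only the bonds in a window around the support of `f` contribute,
and the sum over the window telescopes to `∫ η_n f dμ - ∫ η_m f dμ` with `m, n` outside the
support, which vanishes by exchangeability again.
-/

open MeasureTheory
open scoped BigOperators

/-- The TASEP configuration with the occupation values at sites `x` and `x+1` interchanged. -/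
def swapConf (η : ℤ → Bool) (x : ℤ) : ℤ → Bool :=
  fun y => if y = x then η (x + 1) else if y = x + 1 then η x else η y

open scoped ENNReal

theorem Int.sum_Ico_sub {M : Type*} [AddCommGroup M] (F : ℤ → M) {m n : ℤ} (hmn : m ≤ n) :
    ∑ x ∈ Finset.Ico m n, (F (x + 1) - F x) = F n - F m := by
  induction n, hmn using Int.leInduction with
  | base => simp
  | succ n hmn ih =>
    rw [← Finset.insert_Ico_right_eq_Ico_add_one hmn, Finset.sum_insert (by simp), ih]
    abel

section Cylinder

variable {ι : Type*}

def IsCylinderOn {β : Type*} (T : Finset ι) (g : (ι → Bool) → β) : Prop :=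
  ∀ η η' : ι → Bool, (∀ x ∈ T, η x = η' x) → g η = g η'

theorem Finset.restrict_surjective {π : ι → Type*} [∀ i, Nonempty (π i)] (T : Finset ι) :
    Function.Surjective (T.restrict (π := π)) :=
  Subtype.surjective_restrict _

theorem Finset.restrict_comp_swap [DecidableEq ι] {T : Finset ι} {a b : ι} (ha : a ∈ T)
    (hb : b ∈ T) (η : ι → Bool) :
    T.restrict (η ∘ Equiv.swap a b) = T.restrict η ∘ Equiv.swap ⟨a, ha⟩ ⟨b, hb⟩ := by
  funext x
  simp only [Finset.restrict, Function.comp_apply, Equiv.swap_apply_def, Subtype.ext_iff]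
  split_ifs <;> rfl

namespace IsCylinderOn

variable {β : Type*} {T U : Finset ι} {g : (ι → Bool) → β}

theorem mono (hg : IsCylinderOn T g) (hTU : T ⊆ U) : IsCylinderOn U g :=
  fun η η' h => hg η η' fun x hx => h x (hTU hx)

theorem mono_insert [DecidableEq ι] (hg : IsCylinderOn T g) (a : ι) :
    IsCylinderOn (insert a T) g :=
  hg.mono (Finset.subset_insert a T)

theorem comp_swap [DecidableEq ι] (hg : IsCylinderOn T g) {a b : ι} (ha : a ∈ T) (hb : b ∈ T) :
    IsCylinderOn T (fun η => g (η ∘ Equiv.swap a b)) := by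
  refine fun η η' h => hg _ _ fun x hx => h _ ?_
  rw [Equiv.swap_apply_def]
  split_ifs <;> assumption

theorem comp_swap_eq [DecidableEq ι] (hg : IsCylinderOn T g) {a b : ι} (ha : a ∉ T)
    (hb : b ∉ T) (η : ι → Bool) : g (η ∘ Equiv.swap a b) = g η :=
  hg _ _ fun x hx => by
    rw [Function.comp_apply, Equiv.swap_apply_of_ne_of_ne (ne_of_mem_of_not_mem hx ha)
      (ne_of_mem_of_not_mem hx hb)]

theorem exists_comp_restrict (hg : IsCylinderOn T g) :
    ∃ g' : (T → Bool) → β, g = g' ∘ T.restrict := by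
  have hsurj := T.restrict_surjective (π := fun _ => Bool)
  refine ⟨g ∘ Function.surjInv hsurj, funext fun η => hg _ _ fun x hx => ?_⟩
  exact (congrFun (Function.surjInv_eq hsurj (T.restrict η)) ⟨x, hx⟩).symm

theorem integrable {E : Type*} [NormedAddCommGroup E] {g : (ι → Bool) → E}
    (hg : IsCylinderOn T g) (μ : Measure (ι → Bool)) [IsFiniteMeasure μ] : Integrable g μ := by
  obtain ⟨g', rfl⟩ := hg.exists_comp_restrict
  exact Integrable.of_finite.comp_measurable T.measurable_restrict

end IsCylinderOn

end Cylinder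

section Exchangeability

variable {ι : Type*}

def IsIIDProduct (p : Bool → ℝ≥0∞) (μ : Measure (ι → Bool)) : Prop :=
  ∀ (S : Finset ι) (v : ι → Bool), μ {η | ∀ x ∈ S, η x = v x} = ∏ x ∈ S, p (v x)

namespace IsIIDProduct

variable {p : Bool → ℝ≥0∞} {μ : Measure (ι → Bool)}

theorem map_restrict_singleton (hμ : IsIIDProduct p μ) (T : Finset ι) (v : T → Bool) :
    μ.map T.restrict {v} = ∏ i, p (v i) := by
  obtain ⟨w, rfl⟩ := T.restrict_surjective (π := fun _ => Bool) v
  have hpre : T.restrict ⁻¹' ({T.restrict w} : Set (T → Bool)) =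
      {η : ι → Bool | ∀ x ∈ T, η x = w x} := by
    ext η
    simp [funext_iff]
  rw [Measure.map_apply T.measurable_restrict (measurableSet_singleton _), hpre, hμ,
    ← Finset.prod_coe_sort]
  rfl

theorem map_comp_perm_map_restrict (hμ : IsIIDProduct p μ) (T : Finset ι) (σ : Equiv.Perm T) :
    (μ.map T.restrict).map (fun v => v ∘ σ) = μ.map T.restrict := by
  refine Measure.ext_of_singleton fun v => ?_
  have hpre : (fun u : T → Bool => u ∘ σ) ⁻¹' {v} = {v ∘ σ.symm} := by
    ext u
    simp [Equiv.eq_comp_symm]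
  rw [Measure.map_apply .of_discrete (measurableSet_singleton _), hpre,
    hμ.map_restrict_singleton, hμ.map_restrict_singleton]
  exact Equiv.prod_comp σ.symm fun i => p (v i)

theorem integral_comp_swap [DecidableEq ι] (hμ : IsIIDProduct p μ) {E : Type*}
    [NormedAddCommGroup E] [NormedSpace ℝ E] {T : Finset ι} {g : (ι → Bool) → E}
    (hg : IsCylinderOn T g) (a b : ι) :
    ∫ η, g (η ∘ Equiv.swap a b) ∂μ = ∫ η, g η ∂μ := by
  set U := insert a (insert b T)
  have ha : a ∈ U := by simp [U]
  have hb : b ∈ U := by simp [U]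
  obtain ⟨g', rfl⟩ := ((hg.mono_insert b).mono_insert a).exists_comp_restrict
  set ν := μ.map U.restrict
  set σ := Equiv.swap (⟨a, ha⟩ : U) ⟨b, hb⟩
  have hres : AEMeasurable (U.restrict (π := fun _ => Bool)) μ :=
    U.measurable_restrict.aemeasurable
  calc ∫ η, g' (U.restrict (η ∘ Equiv.swap a b)) ∂μ
      = ∫ η, g' (U.restrict η ∘ σ) ∂μ := by simp only [Finset.restrict_comp_swap ha hb, σ]
    _ = ∫ v, g' (v ∘ σ) ∂ν :=
        (integral_map (f := fun v => g' (v ∘ σ)) hres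
          AEStronglyMeasurable.of_discrete).symm
    _ = ∫ v, g' v ∂(ν.map fun v => v ∘ σ) :=
        (integral_map Measurable.of_discrete.aemeasurable
          AEStronglyMeasurable.of_discrete).symm
    _ = ∫ v, g' v ∂ν := by rw [hμ.map_comp_perm_map_restrict]
    _ = ∫ η, g' (U.restrict η) ∂μ :=
        integral_map hres AEStronglyMeasurable.of_discrete

end IsIIDProduct

end Exchangeability

section Jump

variable {ι E : Type*} [DecidableEq ι] [NormedAddCommGroup E]

def jumpGenerator (a b : ι) (f : (ι → Bool) → E) (η : ι → Bool) : E :=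
  if η a = true ∧ η b = false then f (η ∘ Equiv.swap a b) - f η else 0

variable {T : Finset ι} {f : (ι → Bool) → E}

theorem IsCylinderOn.jumpGenerator (hf : IsCylinderOn T f) (a b : ι) :
    IsCylinderOn (insert a (insert b T)) (jumpGenerator a b f) := by
  intro η η' h
  have hU := (hf.mono_insert b).mono_insert a
  have hswap := hU.comp_swap (a := a) (b := b) (by simp) (by simp) η η' h
  simp only [_root_.jumpGenerator, h a (by simp), h b (by simp), hU η η' h, hswap]

theorem IsCylinderOn.ite_coords (hf : IsCylinderOn T f) (a b : ι) (p : Bool → Bool → Prop)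
    [DecidableRel p] :
    IsCylinderOn (insert a (insert b T)) (fun η => if p (η a) (η b) then f η else 0) := by
  intro η η' h
  have hU := (hf.mono_insert b).mono_insert a
  simp only [h a (by simp), h b (by simp), hU η η' h]

theorem jumpGenerator_eq_zero (hf : IsCylinderOn T f) {a b : ι} (ha : a ∉ T) (hb : b ∉ T) :
    jumpGenerator a b f = 0 := by
  funext η
  simp [jumpGenerator, hf.comp_swap_eq ha hb]

theorem IsIIDProduct.integral_jumpGenerator [NormedSpace ℝ E] {p : Bool → ℝ≥0∞}
    {μ : Measure (ι → Bool)} [IsFiniteMeasure μ] (hμ : IsIIDProduct p μ)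
    (hf : IsCylinderOn T f) (a b : ι) :
    ∫ η, jumpGenerator a b f η ∂μ =
      ∫ η, (if η b = true then f η else 0) ∂μ - ∫ η, (if η a = true then f η else 0) ∂μ := by
  set gain := fun η : ι → Bool => if η b = true ∧ η a = false then f η else 0
  set loss := fun η : ι → Bool => if η a = true ∧ η b = false then f η else 0
  have hgain : IsCylinderOn _ gain := hf.ite_coords a b fun x y => y = true ∧ x = false
  have hloss : IsCylinderOn _ loss := hf.ite_coords a b fun x y => x = true ∧ y = false
  have hjump : jumpGenerator a b f = fun η => gain (η ∘ Equiv.swap a b) - loss η := by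
    funext η
    by_cases hab : a = b
    · subst hab; simp [jumpGenerator, gain, loss]
    · cases ha : η a <;> cases hb : η b <;> simp [jumpGenerator, gain, loss, ha, hb]
  have hocc (c : ι) : Integrable (fun η => if η c = true then f η else 0) μ :=
    (hf.ite_coords c c fun x _ => x = true).integrable μ
  calc ∫ η, jumpGenerator a b f η ∂μ
      = ∫ η, gain (η ∘ Equiv.swap a b) ∂μ - ∫ η, loss η ∂μ := by
        rw [hjump, integral_sub ((hgain.comp_swap (by simp) (by simp)).integrable μ)
          (hloss.integrable μ)]
    _ = ∫ η, gain η - loss η ∂μ := by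
        rw [hμ.integral_comp_swap hgain, integral_sub (hgain.integrable μ) (hloss.integrable μ)]
    _ = ∫ η, (if η b = true then f η else 0) - (if η a = true then f η else 0) ∂μ := by
        congr 1 with η
        simp only [gain, loss]
        generalize η a = x, η b = y
        cases x <;> cases y <;> simp
    _ = _ := integral_sub (hocc b) (hocc a)

end Jump

theorem swapConf_eq_comp_swap (η : ℤ → Bool) (x : ℤ) :
    swapConf η x = η ∘ Equiv.swap x (x + 1) := by
  funext y
  simp only [swapConf, Function.comp_apply, Equiv.swap_apply_def]
  split_ifs <;> rfl

theorem bernoulli_product_invariant_TASEP_general (ρ : ℝ)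
    (μ : Measure (ℤ → Bool)) [IsProbabilityMeasure μ]
    (hμ : ∀ (S : Finset ℤ) (v : ℤ → Bool),
      μ {η | ∀ x ∈ S, η x = v x}
        = ∏ x ∈ S, ENNReal.ofReal (if v x then ρ else 1 - ρ))
    (f : (ℤ → Bool) → ℝ)
    (S : Finset ℤ) (hcyl : ∀ η η' : ℤ → Bool, (∀ x ∈ S, η x = η' x) → f η = f η') :
    ∫ η, (∑' x : ℤ, if η x = true ∧ η (x + 1) = false
        then f (swapConf η x) - f η else 0) ∂μ = 0 := by
  have hiid : IsIIDProduct (fun b => ENNReal.ofReal (if b then ρ else 1 - ρ)) μ := hμ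
  have hf : IsCylinderOn S f := hcyl
  obtain ⟨m, n, hmn, hS⟩ : ∃ m n : ℤ, m ≤ n ∧ ∀ x ∈ S, m < x ∧ x < n := by
    obtain ⟨l, hl⟩ := S.bddBelow
    obtain ⟨u, hu⟩ := S.bddAbove
    refine ⟨l - 1, max l u + 1, by omega, fun x hx => ?_⟩
    have := hl hx
    have := hu hx
    omega
  have hnotMem : ∀ x, x ≤ m ∨ n ≤ x → x ∉ S := fun x hx hxS => by
    have := hS x hxS; omega
  have hsum (η : ℤ → Bool) : (∑' x : ℤ, if η x = true ∧ η (x + 1) = false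
      then f (swapConf η x) - f η else 0) = ∑ x ∈ Finset.Ico m n, jumpGenerator x (x + 1) f η := by
    simp only [swapConf_eq_comp_swap]
    refine tsum_eq_sum fun x hx => ?_
    rw [Finset.mem_Ico] at hx
    exact congrFun
      (jumpGenerator_eq_zero hf (hnotMem x (by omega)) (hnotMem (x + 1) (by omega))) η
  set F := fun y : ℤ => ∫ η, (if η y = true then f η else 0) ∂μ
  calc _ = ∫ η, ∑ x ∈ Finset.Ico m n, jumpGenerator x (x + 1) f η ∂μ := by simp only [hsum]
    _ = ∑ x ∈ Finset.Ico m n, ∫ η, jumpGenerator x (x + 1) f η ∂μ :=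
        integral_finsetSum _ fun x _ => (hf.jumpGenerator x (x + 1)).integrable μ
    _ = ∑ x ∈ Finset.Ico m n, (F (x + 1) - F x) :=
        Finset.sum_congr rfl fun x _ => hiid.integral_jumpGenerator hf x (x + 1)
    _ = F n - F m := Int.sum_Ico_sub F hmn
    _ = ∫ η, jumpGenerator m n f η ∂μ := (hiid.integral_jumpGenerator hf m n).symm
    _ = 0 := by
        rw [jumpGenerator_eq_zero hf (hnotMem m (by omega)) (hnotMem n (by omega))]
        simp

/-- The Bernoulli product measure with density `ρ` is invariant for TASEP:
`∫ (Lf) dμ_ρ = 0` for every (bounded measurable) cylinder function `f`. -/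
theorem bernoulli_product_invariant_TASEP (ρ : ℝ) (hρ : ρ ∈ Set.Icc (0:ℝ) 1)
    (μ : Measure (ℤ → Bool)) [IsProbabilityMeasure μ]
    (hμ : ∀ (S : Finset ℤ) (v : ℤ → Bool),
      μ {η | ∀ x ∈ S, η x = v x}
        = ∏ x ∈ S, ENNReal.ofReal (if v x then ρ else 1 - ρ))
    (f : (ℤ → Bool) → ℝ) (hf : Measurable f)
    (S : Finset ℤ) (hcyl : ∀ η η' : ℤ → Bool, (∀ x ∈ S, η x = η' x) → f η = f η') :
    ∫ η, (∑' x : ℤ, if η x = true ∧ η (x + 1) = false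
        then f (swapConf η x) - f η else 0) ∂μ = 0 :=
  bernoulli_product_invariant_TASEP_general ρ μ hμ f S hcyl
end

section
/- For n ≤ −1, the function F_n(x,t) = ((−1)^n/2πi) ∮_{Γ_0} dw (1−w)^{−n} w^{−(x−n+1)} e^{t(w−1)} (contour around 0 only, since there is no pole at 1) satisfies F_{n+1}(x,t) = −Σ_{y < x} F_n(y,t), with the sum over y < x being finite because F_n(y,t) = 0 for y < n. -/
/-!
For `n ≤ 0` and `x < n` both exponents in the integrand of `F_n(x, ·)` are nonnegative, so the
integrand is entire and Cauchy's theorem kills the integral. Off `{0, 1}`, writing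
`(1 - w)^{-n} = (1 - w)^{-(n+1)} (1 - w)` shows that the integrand of `F_n(x)` is the difference of
the integrands of `F_{n+1}(x+1)` and `F_{n+1}(x)`; with the sign `(-1)^{n+1} = -(-1)^n` this gives
`F_n(x) = F_{n+1}(x) - F_{n+1}(x+1)`. Summing over `y ∈ [n, x)` telescopes to `-F_{n+1}(x)`,
because `F_{n+1}(n) = 0`.
-/

open Complex

/-- `F_n(x,t) = ((−1)^n/2πi) ∮ dw (1−w)^{−n} w^{−(x−n+1)} e^{t(w−1)}`, the contour being a
counterclockwise circle of radius `R` around the origin. -/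
noncomputable def Fker (R : ℝ) (n x : ℤ) (t : ℝ) : ℂ :=
  (-1 : ℂ) ^ n / (2 * Real.pi * I) *
    ∮ w in C(0, R), (1 - w) ^ (-n) * w ^ (-(x - n + 1)) * Complex.exp (t * (w - 1))

theorem Finset.sum_Ico_int_telescope {M : Type*} [AddCommGroup M] (f : ℤ → M) {m n : ℤ}
    (h : m ≤ n) : ∑ i ∈ Finset.Ico m n, (f (i + 1) - f i) = f n - f m := by
  induction n, h using Int.leInduction with
  | base => simp
  | succ n hmn ih =>
    rw [← Finset.insert_Ico_right_eq_Ico_add_one hmn, Finset.sum_insert Finset.right_notMem_Ico,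
      ih]
    abel

theorem Fker_eq_zero_of_lt {R : ℝ} (hR : 0 ≤ R) {n x : ℤ} (hn : n ≤ 0) (hx : x < n) (t : ℝ) :
    Fker R n x t = 0 := by
  have hentire : Differentiable ℂ
      fun w : ℂ => (1 - w) ^ (-n) * w ^ (-(x - n + 1)) * exp (t * (w - 1)) :=
    (((differentiable_const 1).sub differentiable_id).zpow (.inr (by omega))).mul
      (differentiable_id.zpow (.inr (by omega))) |>.mul (by fun_prop)
  rw [Fker, hentire.diffContOnCl.circleIntegral_eq_zero hR, mul_zero]

theorem ne_zero_and_one_sub_ne_zero_of_mem_sphere {R : ℝ} (hR0 : R ≠ 0) (hR1 : R ≠ 1) {w : ℂ}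
    (hw : w ∈ Metric.sphere 0 R) : w ≠ 0 ∧ 1 - w ≠ 0 := by
  rw [mem_sphere_zero_iff_norm] at hw
  refine ⟨?_, sub_ne_zero.2 ?_⟩ <;> rintro rfl <;> simp_all [eq_comm]

theorem circleIntegrable_Fker_integrand {R : ℝ} (hR0 : 0 < R) (hR1 : R ≠ 1) (a b : ℤ) (t : ℝ) :
    CircleIntegrable (fun w : ℂ => (1 - w) ^ a * w ^ b * exp (t * (w - 1))) 0 R := by
  have hw := fun w ↦ ne_zero_and_one_sub_ne_zero_of_mem_sphere (w := w) hR0.ne' hR1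
  refine ContinuousOn.circleIntegrable hR0.le (.mul (.mul ?_ ?_) (by fun_prop))
  · exact (continuousOn_const.sub continuousOn_id).zpow₀ a fun w hw' ↦ .inl (hw w hw').2
  · exact continuousOn_id.zpow₀ b fun w hw' ↦ .inl (hw w hw').1

theorem Fker_add_one_right {R : ℝ} (hR0 : 0 < R) (hR1 : R ≠ 1) (n x : ℤ) (t : ℝ) :
    Fker R (n + 1) (x + 1) t = Fker R (n + 1) x t - Fker R n x t := by
  have hI : ((∮ w in C(0, R),
        (1 - w) ^ (-(n + 1)) * w ^ (-(x + 1 - (n + 1) + 1)) * exp (t * (w - 1))) -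
      ∮ w in C(0, R), (1 - w) ^ (-(n + 1)) * w ^ (-(x - (n + 1) + 1)) * exp (t * (w - 1))) =
      ∮ w in C(0, R), (1 - w) ^ (-n) * w ^ (-(x - n + 1)) * exp (t * (w - 1)) := by
    rw [← circleIntegral.integral_sub (circleIntegrable_Fker_integrand hR0 hR1 _ _ t)
      (circleIntegrable_Fker_integrand hR0 hR1 _ _ t)]
    refine circleIntegral.integral_congr hR0.le fun w hw ↦ ?_
    obtain ⟨hw0, hw1⟩ := ne_zero_and_one_sub_ne_zero_of_mem_sphere hR0.ne' hR1 hw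
    have hn : -n = -(n + 1) + 1 := by ring
    have hx : -(x - (n + 1) + 1) = -(x + 1 - (n + 1) + 1) + 1 := by ring
    have hx' : -(x - n + 1) = -(x + 1 - (n + 1) + 1) := by ring
    simp only [hn, hx, hx', zpow_add_one₀ hw0, zpow_add_one₀ hw1]
    ring
  rw [Fker, Fker, Fker, ← hI, zpow_add_one₀ (by norm_num : (-1 : ℂ) ≠ 0)]
  ring

/-- For `n ≤ −1` and a contour enclosing only `0` (radius `0 < R < 1`): `F_n(y,t) = 0` for
`y < n`, and `F_{n+1}(x,t) = −Σ_{y<x} F_n(y,t)` (the sum over `y < x` being finite,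
reducing to `y ∈ [n, x)`). -/
theorem Fker_sum_relation (R : ℝ) (hR0 : 0 < R) (hR1 : R < 1)
    (n : ℤ) (hn : n ≤ -1) (x : ℤ) (t : ℝ) :
    (∀ y : ℤ, y < n → Fker R n y t = 0) ∧
      Fker R (n + 1) x t = -(∑ y ∈ Finset.Ico n x, Fker R n y t) := by
  refine ⟨fun y hy ↦ Fker_eq_zero_of_lt hR0.le (by omega) hy t, ?_⟩
  rcases lt_or_ge x n with hx | hx
  · rw [Finset.Ico_eq_empty_of_le hx.le, Finset.sum_empty, neg_zero]
    exact Fker_eq_zero_of_lt hR0.le (by omega) (by omega) t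
  · have hbase : Fker R (n + 1) n t = 0 := Fker_eq_zero_of_lt hR0.le (by omega) (by omega) t
    have hstep (y : ℤ) : Fker R n y t = -(Fker R (n + 1) (y + 1) t - Fker R (n + 1) y t) := by
      rw [Fker_add_one_right hR0 hR1.ne n y t]; ring
    simp only [hstep, Finset.sum_neg_distrib, neg_neg,
      Finset.sum_Ico_int_telescope (fun y ↦ Fker R (n + 1) y t) hx, hbase, sub_zero]
end
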